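/- arXiv:2109.13700 — 4 statements merged into one kernel-verified Lean document; each statement's English description precedes it below -/
import Mathlib

section
/- For a nonzero real λ and u ≠ 1, the degenerate Frobenius-Euler numbers satisfy h_{n,λ}(1|u) − u·h_{n,λ}(u) = (1−u)·δ_{n,0} for all n ≥ 0, where δ_{n,0} is the Kronecker delta and h_{n,λ}(u) = h_{n,λ}(0|u). -/
open Finset PowerSeries

/-- The degenerate exponential `e_λ^x(t) = (1+λt)^{x/λ} = ∑_n (x)_{n,λ} t^n/n!`,
given via its power series coefficients. -/
noncomputable def degExp (lam : ℝ) (x : ℂ) : PowerSeries ℂ :=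
  PowerSeries.mk fun n => (∏ i ∈ Finset.range n, (x - (i : ℂ) * (lam : ℂ))) * (n.factorial : ℂ)⁻¹

/-!
Write `H_x(t) = ∑ h_n(x) tⁿ/n!` and `E = degExp λ 1`. The defining identity at `x = 1` and
`x = 0`, together with `e_λ^0(t) = 1`, gives `(H_1 - u H_0)(E - u) = (1 - u)(E - u)`.
Since `E - u` has linear coefficient `1`, it is a nonzero element of the domain `ℂ⟦t⟧` and may be
cancelled, so `H_1 - u H_0 = 1 - u`; comparing coefficients of `tⁿ` gives the claim.
-/

noncomputable def egf {K : Type*} [Field K] (f : ℕ → K) : PowerSeries K :=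
  PowerSeries.mk fun n => f n * (n.factorial : K)⁻¹

section Egf

variable {K : Type*} [Field K]

theorem coeff_egf (f : ℕ → K) (n : ℕ) : coeff n (egf f) = f n * (n.factorial : K)⁻¹ :=
  coeff_mk n _

theorem egf_sub_mul (f g : ℕ → K) (c : K) :
    egf (fun n => f n - c * g n) = egf f - C c * egf g := by
  ext n
  simp only [coeff_egf, map_sub, coeff_C_mul]
  ring

theorem eq_ite_of_egf_eq_C [CharZero K] {f : ℕ → K} {c : K} (hf : egf f = C c) (n : ℕ) :
    f n = c * if n = 0 then 1 else 0 := by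
  have hn := congrArg (coeff n) hf
  rw [coeff_egf, coeff_C, mul_inv_eq_iff_eq_mul₀ (Nat.cast_ne_zero.mpr n.factorial_ne_zero)] at hn
  rw [hn]
  split_ifs with h0
  · simp [h0]
  · simp

end Egf

theorem degExp_zero (lam : ℝ) : degExp lam 0 = 1 := by
  ext n
  cases n with
  | zero => simp [degExp]
  | succ k =>
    have hprod : ∏ i ∈ range (k + 1), -((i : ℂ) * lam) = 0 :=
      prod_eq_zero (mem_range.mpr k.succ_pos) (by simp)
    simp [degExp, coeff_one, hprod]

theorem degExp_one_sub_C_ne_zero (lam : ℝ) (u : ℂ) : degExp lam 1 - C u ≠ 0 := by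
  intro h
  have h1 := congrArg (coeff 1) h
  simp [degExp] at h1

theorem deg_frobenius_euler_numbers_general (lam : ℝ) (u : ℂ)
    (h : ℕ → ℂ → ℂ)
    (hh : ∀ x : ℂ,
      (PowerSeries.mk fun n => h n x * (n.factorial : ℂ)⁻¹)
          * (degExp lam 1 - PowerSeries.C u)
        = (1 - u) • degExp lam x) :
    ∀ n : ℕ, h n 1 - u * h n 0 = (1 - u) * (if n = 0 then 1 else 0) := by
  have hegf (x : ℂ) : egf (h · x) * (degExp lam 1 - C u) = (1 - u) • degExp lam x := hh x
  have key : egf (fun n => h n 1 - u * h n 0) * (degExp lam 1 - C u)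
      = C (1 - u) * (degExp lam 1 - C u) := by
    rw [egf_sub_mul, sub_mul, mul_assoc, hegf 1, hegf 0, degExp_zero, smul_eq_C_mul,
      smul_eq_C_mul, map_sub, map_one]
    ring
  exact eq_ite_of_egf_eq_C (mul_right_cancel₀ (degExp_one_sub_C_ne_zero lam u) key)

theorem deg_frobenius_euler_numbers (lam : ℝ) (hlam : lam ≠ 0) (u : ℂ) (hu : u ≠ 1)
    (h : ℕ → ℂ → ℂ)
    (hh : ∀ x : ℂ,
      (PowerSeries.mk fun n => h n x * (n.factorial : ℂ)⁻¹)
          * (degExp lam 1 - PowerSeries.C u)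
        = (1 - u) • degExp lam x) :
    ∀ n : ℕ, h n 1 - u * h n 0 = (1 - u) * (if n = 0 then 1 else 0) :=
  deg_frobenius_euler_numbers_general lam u h hh
end

section
/- Let λ ≠ 0, u ≠ 1, and let p(x) be a polynomial of degree n with complex coefficients. If p(x) = ∑_{k=0}^{n} a_k h_{k,λ}(x|u), then for each k, a_k = (1/((1−u) k! λ^k)) ∑_{j=0}^{k} C(k,j) (−1)^{k−j} (p(1 + jλ) − u·p(jλ)). -/
open Finset PowerSeries Polynomial

section DegenerateFallingFactorial

variable {R : Type*} [CommRing R]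

/-- The degenerate falling factorial `(x)_{n,λ} = x (x - λ) ⋯ (x - (n - 1) λ)`. -/
def degFallingFactorial (lam x : R) (n : ℕ) : R :=
  ∏ i ∈ range n, (x - i * lam)

theorem degFallingFactorial_succ (lam x : R) (n : ℕ) :
    degFallingFactorial lam x (n + 1) = degFallingFactorial lam x n * (x - n * lam) :=
  prod_range_succ _ _

/-- The Chu–Vandermonde identity for degenerate falling factorials. -/
theorem degFallingFactorial_add (lam x y : R) (n : ℕ) :
    degFallingFactorial lam (x + y) n = ∑ ij ∈ antidiagonal n,
      n.choose ij.1 * (degFallingFactorial lam x ij.1 * degFallingFactorial lam y ij.2) := by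
  induction n with
  | zero => simp [degFallingFactorial]
  | succ n ih =>
    rw [sum_antidiagonal_choose_succ_mul
      (fun i j => degFallingFactorial lam x i * degFallingFactorial lam y j),
      ← sum_add_distrib, degFallingFactorial_succ, ih, sum_mul]
    refine sum_congr rfl fun ij hij => ?_
    obtain rfl : ij.1 + ij.2 = n := mem_antidiagonal.mp hij
    rw [Nat.choose_symm_add, degFallingFactorial_succ, degFallingFactorial_succ]
    push_cast
    ring

theorem degFallingFactorial_natCast_mul (lam : R) (j n : ℕ) :
    degFallingFactorial lam (j * lam) n = lam ^ n * n.factorial * j.choose n := by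
  have h : degFallingFactorial lam (j * lam) n = lam ^ n * ∏ i ∈ range n, ((j : R) - i) := by
    rw [degFallingFactorial, ← card_range n, ← prod_const, card_range, ← prod_mul_distrib]
    exact prod_congr rfl fun i _ => by ring
  rw [h, ← descPochhammer_eval_eq_prod_range, descPochhammer_eval_eq_descFactorial,
    Nat.descFactorial_eq_factorial_mul_choose]
  push_cast
  ring

end DegenerateFallingFactorial

section BinomialInversion

variable {R : Type*} [CommRing R]

/-- The `k`-th forward difference of `j ↦ C(j, i)` at `0`. -/
theorem sum_choose_mul_neg_one_pow_mul_choose (k i : ℕ) :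
    ∑ j ∈ range (k + 1), (k.choose j : R) * (-1) ^ (k - j) * (j.choose i : R) =
      if k = i then 1 else 0 := by
  have h := fwdDiff_iter_choose_zero i k
  rw [fwdDiff_iter_eq_sum_shift] at h
  replace h := congrArg (Int.cast : ℤ → R) h
  rw [apply_ite Int.cast, Int.cast_one, Int.cast_zero] at h
  rw [← h]
  push_cast [zero_add, smul_eq_mul, mul_one]
  exact sum_congr rfl fun j _ => by ring

/-- Binomial inversion. -/
theorem sum_choose_mul_neg_one_pow_mul_sum_choose {k n : ℕ} (hk : k ≤ n) (b : ℕ → R) :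
    ∑ j ∈ range (k + 1), (k.choose j : R) * (-1) ^ (k - j) *
      ∑ i ∈ range (n + 1), b i * (j.choose i : R) = b k := by
  calc _ = ∑ i ∈ range (n + 1), b i *
          ∑ j ∈ range (k + 1), (k.choose j : R) * (-1) ^ (k - j) * (j.choose i : R) := by
        simp_rw [mul_sum]
        rw [sum_comm]
        exact sum_congr rfl fun i _ => sum_congr rfl fun j _ => by ring
    _ = b k := by
        simp_rw [sum_choose_mul_neg_one_pow_mul_choose, mul_ite, mul_one, mul_zero]
        rw [sum_ite_eq, if_pos (mem_range_succ_iff.mpr hk)]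

end BinomialInversion

theorem coeff_degExp (lam : ℝ) (x : ℂ) (n : ℕ) :
    PowerSeries.coeff n (degExp lam x) = degFallingFactorial (lam : ℂ) x n * (n.factorial : ℂ)⁻¹ :=
  coeff_mk _ _

theorem constantCoeff_degExp (lam : ℝ) (x : ℂ) :
    PowerSeries.constantCoeff (degExp lam x) = 1 := by
  rw [← coeff_zero_eq_constantCoeff_apply, coeff_degExp]
  simp [degFallingFactorial]

theorem degExp_add (lam : ℝ) (x y : ℂ) : degExp lam (x + y) = degExp lam x * degExp lam y := by
  ext n
  rw [PowerSeries.coeff_mul, coeff_degExp, degFallingFactorial_add, sum_mul]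
  refine sum_congr rfl fun ij hij => ?_
  obtain rfl : ij.1 + ij.2 = n := mem_antidiagonal.mp hij
  rw [coeff_degExp, coeff_degExp, Nat.choose_symm_add,
    ← Nat.add_choose_mul_factorial_mul_factorial]
  have : ((ij.1 + ij.2).choose ij.2 : ℂ) ≠ 0 :=
    Nat.cast_ne_zero.mpr (Nat.choose_pos (by omega)).ne'
  push_cast
  field_simp

/-- `h n x = h_{n,λ}(x|u)`: the generating function `(1 - u) e_λ^x(t) / (e_λ(t) - u)`, with the
denominator cleared. -/
def IsDegFrobeniusEuler (lam : ℝ) (u : ℂ) (h : ℕ → ℂ → ℂ) : Prop :=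
  ∀ x : ℂ, (PowerSeries.mk fun n => h n x * (n.factorial : ℂ)⁻¹) *
    (degExp lam 1 - PowerSeries.C u) = (1 - u) • degExp lam x

theorem IsDegFrobeniusEuler.add_one_sub_mul {lam : ℝ} {u : ℂ} {h : ℕ → ℂ → ℂ}
    (hh : IsDegFrobeniusEuler lam u h) (hu : u ≠ 1) (x : ℂ) (k : ℕ) :
    h k (x + 1) - u * h k x = (1 - u) * degFallingFactorial (lam : ℂ) x k := by
  set H : ℂ → PowerSeries ℂ := fun y => PowerSeries.mk fun n => h n y * (n.factorial : ℂ)⁻¹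
  have hD : degExp lam 1 - PowerSeries.C u ≠ 0 := fun h0 => by
    have := congrArg PowerSeries.constantCoeff h0
    rw [map_sub, constantCoeff_degExp, PowerSeries.constantCoeff_C, map_zero, sub_eq_zero] at this
    exact hu this.symm
  have hser : H (x + 1) - PowerSeries.C u * H x = (1 - u) • degExp lam x := by
    refine mul_right_cancel₀ hD ?_
    rw [sub_mul, mul_assoc, hh, hh, degExp_add]
    simp only [PowerSeries.smul_eq_C_mul]
    ring
  have hk := congrArg (PowerSeries.coeff k) hser
  simp only [H, map_sub, PowerSeries.coeff_C_mul, coeff_mk, PowerSeries.coeff_smul, coeff_degExp,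
    smul_eq_mul] at hk
  field_simp at hk
  exact (div_left_inj' (Nat.cast_ne_zero.mpr k.factorial_ne_zero)).mp hk

theorem repr_by_deg_frobenius_euler_general (lam : ℝ) (hlam : lam ≠ 0) (u : ℂ) (hu : u ≠ 1)
    (h : ℕ → ℂ → ℂ)
    (hh : ∀ x : ℂ,
      (PowerSeries.mk fun n => h n x * (n.factorial : ℂ)⁻¹)
          * (degExp lam 1 - PowerSeries.C u)
        = (1 - u) • degExp lam x)
    (n : ℕ) (p : Polynomial ℂ) (a : ℕ → ℂ)
    (hpa : ∀ x : ℂ, p.eval x = ∑ k ∈ Finset.range (n + 1), a k * h k x) :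
    ∀ k ≤ n,
      a k = (1 / ((1 - u) * (k.factorial : ℂ) * (lam : ℂ) ^ k))
        * ∑ j ∈ Finset.range (k + 1), (k.choose j : ℂ) * (-1) ^ (k - j)
            * (p.eval (1 + (j : ℂ) * (lam : ℂ)) - u * p.eval ((j : ℂ) * (lam : ℂ))) := by
  intro k hk
  have hdiff (j : ℕ) : p.eval (1 + j * (lam : ℂ)) - u * p.eval (j * (lam : ℂ)) =
      ∑ i ∈ range (n + 1), (1 - u) * (lam : ℂ) ^ i * i.factorial * a i * (j.choose i : ℂ) := by
    rw [hpa, hpa, mul_sum, ← sum_sub_distrib]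
    refine sum_congr rfl fun i _ => ?_
    rw [add_comm, ← mul_left_comm, ← mul_sub, IsDegFrobeniusEuler.add_one_sub_mul hh hu,
      degFallingFactorial_natCast_mul]
    ring
  simp_rw [hdiff, sum_choose_mul_neg_one_pow_mul_sum_choose hk]
  have hu' : 1 - u ≠ 0 := sub_ne_zero.mpr hu.symm
  have hlam' : (lam : ℂ) ≠ 0 := Complex.ofReal_ne_zero.mpr hlam
  have hk' : (k.factorial : ℂ) ≠ 0 := Nat.cast_ne_zero.mpr k.factorial_ne_zero
  field_simp

theorem repr_by_deg_frobenius_euler (lam : ℝ) (hlam : lam ≠ 0) (u : ℂ) (hu : u ≠ 1)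
    (h : ℕ → ℂ → ℂ)
    (hh : ∀ x : ℂ,
      (PowerSeries.mk fun n => h n x * (n.factorial : ℂ)⁻¹)
          * (degExp lam 1 - PowerSeries.C u)
        = (1 - u) • degExp lam x)
    (n : ℕ) (p : Polynomial ℂ) (hp : p.natDegree = n) (a : ℕ → ℂ)
    (hpa : ∀ x : ℂ, p.eval x = ∑ k ∈ Finset.range (n + 1), a k * h k x) :
    ∀ k ≤ n,
      a k = (1 / ((1 - u) * (k.factorial : ℂ) * (lam : ℂ) ^ k))
        * ∑ j ∈ Finset.range (k + 1), (k.choose j : ℂ) * (-1) ^ (k - j)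
            * (p.eval (1 + (j : ℂ) * (lam : ℂ)) - u * p.eval ((j : ℂ) * (lam : ℂ))) :=
  repr_by_deg_frobenius_euler_general lam hlam u hu h hh n p a hpa
end

section
/- Let u ≠ 1 and let p(x) be a polynomial of degree n with complex coefficients. If p(x) = ∑_{k=0}^{n} a_k H_k(x|u), then a_k = (1/((1−u) k!)) (p^{(k)}(1) − u·p^{(k)}(0)) for each k, where p^{(k)} denotes the k-th derivative. -/
/-!
Since `e^{(x+1)t} = e^{xt} e^t`, the generating functions at `x + 1` and at `x` satisfy
`G_{x+1} - u G_x = (1 - u) e^{xt}`, i.e. `H_m(x + 1) - u H_m(x) = (1 - u) x^m`. So the operator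
`f ↦ f(X + 1) - u f` sends `p = ∑ a_m H_m` to `(1 - u) ∑ a_m X^m`, whose `k`-th coefficient is
`(1 - u) a_k`; by Taylor's formula that coefficient is also `(p^{(k)}(1) - u p^{(k)}(0)) / k!`.
-/

open Finset PowerSeries Polynomial

namespace Polynomial

variable {R : Type*}

theorem iterate_derivative_eval_eq_factorial_mul_coeff_taylor [CommSemiring R]
    (f : R[X]) (r : R) (k : ℕ) :
    (derivative^[k] f).eval r = k.factorial * (taylor r f).coeff k := by
  rw [taylor_coeff, ← factorial_smul_hasseDeriv]
  simp [nsmul_eq_mul]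

noncomputable def twistedDifference [CommRing R] (u : R) : R[X] →ₗ[R] R[X] :=
  taylor 1 - u • LinearMap.id

theorem iterate_derivative_eval_one_sub_mul_eval_zero [CommRing R] (u : R) (f : R[X]) (k : ℕ) :
    (derivative^[k] f).eval 1 - u * (derivative^[k] f).eval 0
      = k.factorial * (twistedDifference u f).coeff k := by
  simp only [iterate_derivative_eval_eq_factorial_mul_coeff_taylor, taylor_zero,
    twistedDifference, LinearMap.sub_apply, LinearMap.smul_apply, LinearMap.id_apply, coeff_sub,
    coeff_smul, smul_eq_mul]
  ring

end Polynomial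

section FrobeniusEuler

variable {K : Type*} [Field K] [CharZero K]

def IsFrobeniusEuler (u : K) (H : ℕ → K[X]) : Prop :=
  ∀ x : K, (PowerSeries.mk fun n => (H n).eval x * (n.factorial : K)⁻¹)
    * (PowerSeries.exp K - PowerSeries.C u) = (1 - u) • PowerSeries.rescale x (PowerSeries.exp K)

variable {u : K} {H : ℕ → K[X]}

theorem IsFrobeniusEuler.genFun_add_one_sub_mul_genFun (hu : u ≠ 1) (hH : IsFrobeniusEuler u H)
    (x : K) :
    (PowerSeries.mk fun n => (H n).eval (x + 1) * (n.factorial : K)⁻¹)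
        - PowerSeries.C u * (PowerSeries.mk fun n => (H n).eval x * (n.factorial : K)⁻¹)
      = (1 - u) • PowerSeries.rescale x (PowerSeries.exp K) := by
  have hexp : PowerSeries.exp K - PowerSeries.C u ≠ 0 := fun h => by
    simpa [sub_eq_zero, hu.symm] using congrArg PowerSeries.constantCoeff h
  have hres : rescale (x + 1) (exp K) = rescale x (exp K) * exp K := by
    rw [← exp_mul_exp_eq_exp_add, rescale_one, RingHom.id_apply]
  apply mul_right_cancel₀ hexp
  rw [sub_mul, hH, mul_assoc, hH, hres]
  simp only [PowerSeries.smul_eq_C_mul]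
  ring

theorem IsFrobeniusEuler.eval_add_one_sub_mul_eval (hu : u ≠ 1) (hH : IsFrobeniusEuler u H)
    (m : ℕ) (x : K) :
    (H m).eval (x + 1) - u * (H m).eval x = (1 - u) * x ^ m := by
  have := congrArg (PowerSeries.coeff m) (hH.genFun_add_one_sub_mul_genFun hu x)
  simp only [map_sub, PowerSeries.coeff_mk, PowerSeries.coeff_C_mul, PowerSeries.coeff_smul,
    PowerSeries.coeff_rescale, PowerSeries.coeff_exp, smul_eq_mul, one_div, map_inv₀,
    map_natCast] at this
  have hfac : (m.factorial : K) ≠ 0 := Nat.cast_ne_zero.mpr m.factorial_ne_zero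
  field_simp at this
  linear_combination this

theorem IsFrobeniusEuler.twistedDifference_eq (hu : u ≠ 1) (hH : IsFrobeniusEuler u H) (m : ℕ) :
    twistedDifference u (H m) = (1 - u) • Polynomial.X ^ m :=
  Polynomial.funext fun x => by
    simp [twistedDifference, taylor_eval, hH.eval_add_one_sub_mul_eval hu]

end FrobeniusEuler

theorem repr_by_frobenius_euler_general (u : ℂ) (hu : u ≠ 1) (H : ℕ → Polynomial ℂ)
    (hH : ∀ x : ℂ,
      (PowerSeries.mk fun n => (H n).eval x * (n.factorial : ℂ)⁻¹)
          * (PowerSeries.exp ℂ - PowerSeries.C u)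
        = (1 - u) • PowerSeries.rescale x (PowerSeries.exp ℂ))
    (n : ℕ) (p : Polynomial ℂ) (a : ℕ → ℂ)
    (hpa : p = ∑ k ∈ Finset.range (n + 1), a k • H k) :
    ∀ k ≤ n,
      a k = (1 / ((1 - u) * (k.factorial : ℂ)))
        * ((Polynomial.derivative^[k] p).eval 1 - u * (Polynomial.derivative^[k] p).eval 0) := by
  intro k hk
  have hcoeff : (twistedDifference u p).coeff k = (1 - u) * a k := by
    simp only [hpa, map_sum, map_smul, IsFrobeniusEuler.twistedDifference_eq hu hH,
      finsetSum_coeff, Polynomial.coeff_smul, Polynomial.coeff_X_pow, smul_eq_mul, mul_ite,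
      mul_one, mul_zero, sum_ite_eq, mem_range, Nat.lt_succ_of_le hk, ↓reduceIte]
    ring
  have hu' : 1 - u ≠ 0 := sub_ne_zero.mpr hu.symm
  have hfac : (k.factorial : ℂ) ≠ 0 := Nat.cast_ne_zero.mpr k.factorial_ne_zero
  rw [iterate_derivative_eval_one_sub_mul_eval_zero, hcoeff]
  field_simp

theorem repr_by_frobenius_euler (u : ℂ) (hu : u ≠ 1) (H : ℕ → Polynomial ℂ)
    (hH : ∀ x : ℂ,
      (PowerSeries.mk fun n => (H n).eval x * (n.factorial : ℂ)⁻¹)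
          * (PowerSeries.exp ℂ - PowerSeries.C u)
        = (1 - u) • PowerSeries.rescale x (PowerSeries.exp ℂ))
    (n : ℕ) (p : Polynomial ℂ) (hp : p.natDegree = n) (a : ℕ → ℂ)
    (hpa : p = ∑ k ∈ Finset.range (n + 1), a k • H k) :
    ∀ k ≤ n,
      a k = (1 / ((1 - u) * (k.factorial : ℂ)))
        * ((Polynomial.derivative^[k] p).eval 1 - u * (Polynomial.derivative^[k] p).eval 0) :=
  repr_by_frobenius_euler_general u hu H hH n p a hpa
end

section
/- Let r ≥ 1, u ≠ 1, and let p(x) be a polynomial of degree n with complex coefficients. If p(x) = ∑_{k=0}^{n} a_k H^{(r)}_k(x|u), then a_k = (1/((1−u)^r k!)) ∑_{j=0}^{r} C(r,j) (−u)^{r−j} p^{(k)}(j) for each k. -/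
/-!
Write `E` for the shift `q(x) ↦ q(x + 1)`. Since `e^{(x+j)t} = e^{xt} (e^t)^j`, summing the
generating function identity at the points `x + j` against `C(r,j) (-u)^(r-j)` and cancelling the
factor `(e^t - u)^r`, which is nonzero because its constant term is `(1 - u)^r`, gives
`(E - u)^r H_n = (1 - u)^r x^n`. Hence `(E - u)^r p = (1 - u)^r ∑ a_k x^k`, while by Taylor's
formula the `k`-th coefficient of `(E - u)^r p` is `(1/k!) ∑_j C(r,j) (-u)^(r-j) p^{(k)}(j)`.
-/

open Finset PowerSeries Polynomial
open scoped Nat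

theorem PowerSeries.exp_sub_C_pow_eq_sum {A : Type*} [CommRing A] [Algebra ℚ A] (u : A) (r : ℕ) :
    (exp A - PowerSeries.C u) ^ r
      = ∑ j ∈ range (r + 1), ((r.choose j : A) * (-u) ^ (r - j)) • rescale (j : A) (exp A) := by
  rw [sub_eq_add_neg, ← map_neg, add_pow]
  refine sum_congr rfl fun j _ => ?_
  rw [exp_pow_eq_rescale_exp, ← map_pow, PowerSeries.smul_eq_C_mul, map_mul, map_natCast]
  ring

section ShiftSubPow

variable {R : Type*} [CommRing R]

/-- `(E - u)^r` expanded binomially, where `E = taylor 1` is the shift `q(x) ↦ q(x + 1)`. -/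
noncomputable def shiftSubPow (u : R) (r : ℕ) : R[X] →ₗ[R] R[X] :=
  ∑ j ∈ range (r + 1), ((r.choose j : R) * (-u) ^ (r - j)) • taylor (j : R)

theorem coeff_shiftSubPow_mul_factorial (u : R) (r : ℕ) (q : R[X]) (k : ℕ) :
    (shiftSubPow u r q).coeff k * k !
      = ∑ j ∈ range (r + 1), (r.choose j : R) * (-u) ^ (r - j) * (derivative^[k] q).eval (j : R) := by
  simp only [shiftSubPow, LinearMap.sum_apply, LinearMap.smul_apply, finsetSum_coeff,
    Polynomial.coeff_smul, taylor_coeff, smul_eq_mul, sum_mul, ← factorial_smul_hasseDeriv]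
  refine sum_congr rfl fun j _ => ?_
  rw [eval_smul, nsmul_eq_mul]
  ring

end ShiftSubPow

section FrobeniusEuler

variable {K : Type*} [Field K] [CharZero K] {u : K} {r : ℕ} {H : ℕ → K[X]}

theorem sum_choose_mul_eval_add_eq (hu : u ≠ 1)
    (hH : ∀ x : K, (PowerSeries.mk fun n => (H n).eval x * (n ! : K)⁻¹)
        * (exp K - PowerSeries.C u) ^ r = (1 - u) ^ r • rescale x (exp K))
    (x : K) (n : ℕ) :
    ∑ j ∈ range (r + 1), (r.choose j : K) * (-u) ^ (r - j) * (H n).eval (x + j)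
      = (1 - u) ^ r * x ^ n := by
  set G : K → K⟦X⟧ := fun y => PowerSeries.mk fun n => (H n).eval y * (n ! : K)⁻¹
  set c : ℕ → K := fun j => (r.choose j : K) * (-u) ^ (r - j)
  have hE : (exp K - PowerSeries.C u) ^ r ≠ 0 := by
    refine fun h => pow_ne_zero r (sub_ne_zero.mpr hu.symm) ?_
    simpa using congrArg PowerSeries.constantCoeff h
  have hsum : ∑ j ∈ range (r + 1), c j • G (x + j) = (1 - u) ^ r • rescale x (exp K) := by
    refine mul_right_cancel₀ hE ?_
    calc (∑ j ∈ range (r + 1), c j • G (x + j)) * (exp K - PowerSeries.C u) ^ r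
        = ∑ j ∈ range (r + 1), c j • ((1 - u) ^ r • rescale (x + j) (exp K)) := by
          simp only [sum_mul, smul_mul_assoc, G, hH]
      _ = (1 - u) ^ r • rescale x (exp K) * (exp K - PowerSeries.C u) ^ r := by
          rw [exp_sub_C_pow_eq_sum, mul_sum]
          refine sum_congr rfl fun j _ => ?_
          rw [← exp_mul_exp_eq_exp_add, mul_smul_comm, smul_mul_assoc, smul_comm]
  have hcoeff := congrArg (PowerSeries.coeff n) hsum
  simp only [map_sum, PowerSeries.coeff_smul, coeff_rescale, coeff_exp, G, c, PowerSeries.coeff_mk,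
    smul_eq_mul, ← mul_assoc, ← sum_mul, one_div, map_inv₀, map_natCast] at hcoeff
  exact mul_right_cancel₀ (inv_ne_zero (Nat.cast_ne_zero.mpr n.factorial_ne_zero)) hcoeff

theorem shiftSubPow_apply_eq (hu : u ≠ 1)
    (hH : ∀ x : K, (PowerSeries.mk fun n => (H n).eval x * (n ! : K)⁻¹)
        * (exp K - PowerSeries.C u) ^ r = (1 - u) ^ r • rescale x (exp K))
    (n : ℕ) :
    shiftSubPow u r (H n) = (1 - u) ^ r • Polynomial.X ^ n := by
  refine Polynomial.funext fun x => ?_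
  simp only [shiftSubPow, LinearMap.sum_apply, LinearMap.smul_apply, eval_finsetSum, eval_smul,
    taylor_eval, smul_eq_mul, sum_choose_mul_eval_add_eq hu hH, eval_pow, eval_X]

end FrobeniusEuler

theorem repr_by_higher_order_frobenius_euler_general (r : ℕ) (u : ℂ) (hu : u ≠ 1)
    (H : ℕ → Polynomial ℂ)
    (hH : ∀ x : ℂ,
      (PowerSeries.mk fun n => (H n).eval x * (n.factorial : ℂ)⁻¹)
          * (PowerSeries.exp ℂ - PowerSeries.C u) ^ r
        = ((1 - u) ^ r) • PowerSeries.rescale x (PowerSeries.exp ℂ))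
    (n : ℕ) (p : Polynomial ℂ) (a : ℕ → ℂ)
    (hpa : p = ∑ k ∈ Finset.range (n + 1), a k • H k) :
    ∀ k ≤ n,
      a k = (1 / ((1 - u) ^ r * (k.factorial : ℂ)))
        * ∑ j ∈ Finset.range (r + 1), (r.choose j : ℂ) * (-u) ^ (r - j)
            * (Polynomial.derivative^[k] p).eval (j : ℂ) := by
  intro k hk
  have hcoeff : (shiftSubPow u r p).coeff k = (1 - u) ^ r * a k := by
    simp [hpa, shiftSubPow_apply_eq hu hH, finsetSum_coeff, Polynomial.coeff_X_pow, hk, mul_comm]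
  rw [← coeff_shiftSubPow_mul_factorial, hcoeff]
  have hu' : (1 - u) ^ r ≠ 0 := pow_ne_zero r (sub_ne_zero.mpr hu.symm)
  have hk' : (k ! : ℂ) ≠ 0 := Nat.cast_ne_zero.mpr k.factorial_ne_zero
  field_simp

theorem repr_by_higher_order_frobenius_euler (r : ℕ) (hr : 1 ≤ r) (u : ℂ) (hu : u ≠ 1)
    (H : ℕ → Polynomial ℂ)
    (hH : ∀ x : ℂ,
      (PowerSeries.mk fun n => (H n).eval x * (n.factorial : ℂ)⁻¹)
          * (PowerSeries.exp ℂ - PowerSeries.C u) ^ r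
        = ((1 - u) ^ r) • PowerSeries.rescale x (PowerSeries.exp ℂ))
    (n : ℕ) (p : Polynomial ℂ) (hp : p.natDegree = n) (a : ℕ → ℂ)
    (hpa : p = ∑ k ∈ Finset.range (n + 1), a k • H k) :
    ∀ k ≤ n,
      a k = (1 / ((1 - u) ^ r * (k.factorial : ℂ)))
        * ∑ j ∈ Finset.range (r + 1), (r.choose j : ℂ) * (-u) ^ (r - j)
            * (Polynomial.derivative^[k] p).eval (j : ℂ) :=
  repr_by_higher_order_frobenius_euler_general r u hu H hH n p a hpa
end
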